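/- Privacy loss of the one-dimensional Gaussian mechanism: for f with sensitivity S, adjacent datasets D, D', and noise N(0, S²σ²), the log-ratio of output densities at a point x satisfies |ln( p_D(x) / p_{D'}(x) )| ≤ ε whenever |x − f(D)| ≤ S σ² ε − S/2. -/
import Mathlib


open ProbabilityTheory NNReal

/-- Privacy loss of the one-dimensional Gaussian mechanism: for `f` with sensitivity `S`,
adjacent datasets `D, D'`, and noise `N(0, S²σ²)`, the log-ratio of the output densities
`p_D` and `p_{D'}` at a point `x` satisfies `|ln(p_D(x)/p_{D'}(x))| ≤ ε` whenever
`|x − f(D)| ≤ S σ² ε − S/2`. -/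
theorem gaussian_mechanism_privacy_loss {Dataset : Type*} (adj : Dataset → Dataset → Prop)
    (f : Dataset → ℝ) (S σ : ℝ≥0) (hS : 0 < S) (hσ : 0 < σ) (ε : ℝ) (hε : 0 < ε)
    (hsens : ∀ D D', adj D D' → |f D - f D'| ≤ S)
    (D D' : Dataset) (hadj : adj D D') (x : ℝ)
    (hx : |x - f D| ≤ (S : ℝ) * (σ : ℝ) ^ 2 * ε - (S : ℝ) / 2) :
    |Real.log (gaussianPDFReal (f D) (S ^ 2 * σ ^ 2) x /
      gaussianPDFReal (f D') (S ^ 2 * σ ^ 2) x)| ≤ ε := by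
  have hS0 : (0:ℝ) < (S:ℝ) := hS
  have hσ0 : (0:ℝ) < (σ:ℝ) := hσ
  have hv : (0:ℝ) < 2 * ((S:ℝ)^2 * (σ:ℝ)^2) := by positivity
  set a : ℝ := x - f D with ha
  set d : ℝ := f D - f D' with hd
  have hdS : |d| ≤ (S:ℝ) := hsens D D' hadj
  have hc : (0:ℝ) < (Real.sqrt (2 * Real.pi * ((S:ℝ)^2 * (σ:ℝ)^2)))⁻¹ := by
    rw [inv_pos]
    apply Real.sqrt_pos.mpr
    positivity
  have hratio : gaussianPDFReal (f D) (S ^ 2 * σ ^ 2) x /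
      gaussianPDFReal (f D') (S ^ 2 * σ ^ 2) x
      = Real.exp ((2*a*d + d^2) / (2 * ((S:ℝ)^2 * (σ:ℝ)^2))) := by
    rw [gaussianPDFReal, gaussianPDFReal]
    push_cast
    rw [mul_div_mul_left _ _ (ne_of_gt hc), ← Real.exp_sub]
    congr 1
    have : x - f D' = a + d := by ring
    rw [this, ← ha]
    field_simp
    ring
  rw [hratio, Real.log_exp, abs_div, abs_of_pos hv, div_le_iff₀ hv]
  have h1 : |2*a*d + d^2| ≤ 2 * |a| * (S:ℝ) + (S:ℝ)^2 := by
    calc |2*a*d + d^2| ≤ |2*a*d| + |d^2| := abs_add_le _ _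
      _ = 2 * |a| * |d| + |d|^2 := by
          rw [abs_mul, abs_mul, abs_two, abs_pow]
      _ ≤ 2 * |a| * (S:ℝ) + (S:ℝ)^2 := by
          gcongr
  refine h1.trans ?_
  have ha' : |a| ≤ (S:ℝ) * (σ:ℝ)^2 * ε - (S:ℝ)/2 := hx
  nlinarith [abs_nonneg a]
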